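/- arXiv:1903.08560 — 2 statements merged into one kernel-verified Lean document; each statement's English description precedes it below -/
import Mathlib

section
/- Fix X ∈ ℝ^{n×p} and y ∈ ℝ^n. Initialize β⁽⁰⁾ = 0 and run gradient descent on the least squares loss, β⁽ᵏ⁾ = β⁽ᵏ⁻¹⁾ + t Xᵀ(y − Xβ⁽ᵏ⁻¹⁾) for k = 1,2,3,…, with step size 0 < t ≤ 1/λ_max(XᵀX), where λ_max(XᵀX) is the largest eigenvalue of XᵀX. Then β⁽ᵏ⁾ converges, as k → ∞, to the minimum ℓ₂-norm least squares solution β̂ = (XᵀX)⁺Xᵀy. -/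
open Matrix Filter Topology

noncomputable section

/-- The Moore–Penrose pseudoinverse of a real matrix, defined as the
ridgeless limit `A⁺ = lim_{δ → 0⁺} (AᵀA + δ I)⁻¹ Aᵀ`. -/
def mpinv {m k : ℕ} (A : Matrix (Fin m) (Fin k) ℝ) : Matrix (Fin k) (Fin m) ℝ :=
  limUnder (nhdsWithin (0 : ℝ) (Set.Ioi 0))
    (fun δ => (Aᵀ * A + δ • (1 : Matrix (Fin k) (Fin k) ℝ))⁻¹ * Aᵀ)

/-!
For `A = XᵀX` write `A⁺ = cfc (·⁻¹) A`: in an eigenbasis of `A` it inverts the nonzero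
eigenvalues and kills the kernel, and it is the ridgeless limit defining `mpinv`. Since `Xᵀy`
lies in the range of `A`, the point `β̂ = A⁺Xᵀy` solves the normal equations `Aβ̂ = Xᵀy`, so
the gradient step contracts the error: `β⁽ᵏ⁾ - β̂ = -(1 - tA)ᵏ A⁺Xᵀy`. On an eigenvalue `λ` the
operator `(1 - tA)ᵏ A⁺` acts by `(1 - tλ)ᵏ λ⁻¹`, which is `0` for `λ = 0` and tends to `0` for
`0 < λ ≤ λ_max`, because then `|1 - tλ| < 1`.
-/

namespace Matrix

variable {n : Type*} [Fintype n] [DecidableEq n]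

theorem continuousOn_real_spectrum (A : Matrix n n ℝ) (f : ℝ → ℝ) :
    ContinuousOn f (spectrum ℝ A) :=
  A.finite_real_spectrum.continuousOn f

theorem sub_eq_pow_mulVec_of_richardson {R : Type*} [CommRing R] {A : Matrix n n R}
    {b x : n → R} {t : R} {β : ℕ → n → R} (hβ : ∀ k, β (k + 1) = β k + t • (b - A *ᵥ β k))
    (hx : A *ᵥ x = b) (k : ℕ) : β k - x = (1 - t • A) ^ k *ᵥ (β 0 - x) := by
  induction k with
  | zero => simp
  | succ k ih =>
    rw [pow_succ', ← mulVec_mulVec, ← ih, hβ, ← hx, sub_mulVec, smul_mulVec, one_mulVec,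
      mulVec_sub]
    module

namespace IsHermitian

variable {A : Matrix n n ℝ}

theorem tendsto_cfc (hA : A.IsHermitian) {α : Type*} {l : Filter α} {F : α → ℝ → ℝ}
    {f : ℝ → ℝ} (h : ∀ x ∈ spectrum ℝ A, Tendsto (fun a => F a x) l (𝓝 (f x))) :
    Tendsto (fun a => cfc (F a) A) l (𝓝 (cfc f A)) := by
  simp only [hA.cfc_eq, IsHermitian.cfc, Unitary.conjStarAlgAut_apply, RCLike.ofReal_real_eq_id,
    Function.id_comp]
  have hconj : Continuous fun d : n → ℝ =>
      (hA.eigenvectorUnitary : Matrix n n ℝ) * diagonal d *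
        star (hA.eigenvectorUnitary : Matrix n n ℝ) :=
    (continuous_const.matrix_mul continuous_id.matrix_diagonal).matrix_mul continuous_const
  exact (hconj.tendsto _).comp
    (tendsto_pi_nhds.2 fun i => h _ (hA.eigenvalues_mem_spectrum_real i))

theorem mul_cfc_inv_mul (hA : A.IsHermitian) : A * cfc (fun x : ℝ => x⁻¹) A * A = A := by
  have hc := A.continuousOn_real_spectrum
  have h : cfc (fun x : ℝ => x * x⁻¹ * x) A = cfc (fun x : ℝ => x) A :=
    cfc_congr fun x _ => mul_inv_mul_cancel x
  rwa [cfc_mul (fun x => x * x⁻¹) _ _ (hc _) (hc _), cfc_mul _ _ _ (hc _) (hc _),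
    cfc_id' ℝ A] at h

theorem tendsto_pow_mul_cfc_inv (hA : A.IsHermitian) {t : ℝ}
    (ht : ∀ x ∈ spectrum ℝ A, x ≠ 0 → |1 - t * x| < 1) :
    Tendsto (fun k : ℕ => (1 - t • A) ^ k * cfc (fun x : ℝ => x⁻¹) A) atTop (𝓝 0) := by
  have hc := A.continuousOn_real_spectrum
  have hpow : ∀ k : ℕ, (1 - t • A) ^ k * cfc (fun x : ℝ => x⁻¹) A
      = cfc (fun x => (1 - t * x) ^ k * x⁻¹) A := by
    intro k
    rw [cfc_mul _ _ _ (hc _) (hc _), cfc_pow _ _ _ (hc _), cfc_sub _ _ _ (hc _) (hc _),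
      cfc_const_one ℝ A, cfc_const_mul _ _ _ (hc _), cfc_id' ℝ A]
  simp only [hpow]
  rw [← cfc_zero ℝ A]
  refine hA.tendsto_cfc fun x hx => ?_
  rcases eq_or_ne x 0 with rfl | hx0
  · simp
  · simpa using (tendsto_pow_atTop_nhds_zero_of_abs_lt_one (ht x hx hx0)).mul_const x⁻¹

theorem tendsto_richardson (hA : A.IsHermitian) {t : ℝ}
    (ht : ∀ x ∈ spectrum ℝ A, x ≠ 0 → |1 - t * x| < 1) {b : n → ℝ} (hb : ∃ z, A *ᵥ z = b)
    {β : ℕ → n → ℝ} (hβ0 : β 0 = 0) (hβ : ∀ k, β (k + 1) = β k + t • (b - A *ᵥ β k)) :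
    Tendsto β atTop (𝓝 (cfc (fun x : ℝ => x⁻¹) A *ᵥ b)) := by
  obtain ⟨z, rfl⟩ := hb
  have hx : A *ᵥ (cfc (fun x : ℝ => x⁻¹) A *ᵥ (A *ᵥ z)) = A *ᵥ z := by
    rw [mulVec_mulVec, mulVec_mulVec, hA.mul_cfc_inv_mul]
  have hlim := (((continuous_id.matrix_mulVec (continuous_const (y := A *ᵥ z))).tendsto 0).comp
    (hA.tendsto_pow_mul_cfc_inv ht)).const_sub (cfc (fun x : ℝ => x⁻¹) A *ᵥ (A *ᵥ z))
  simp only [Function.comp_def, id_eq, zero_mulVec, sub_zero] at hlim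
  refine hlim.congr fun k => ?_
  have h := sub_eq_pow_mulVec_of_richardson hβ hx k
  rw [hβ0, zero_sub, mulVec_neg, sub_eq_iff_eq_add] at h
  rw [h, ← mulVec_mulVec]
  abel

theorem abs_one_sub_mul_lt_one_of_mem_spectrum (hA : A.IsHermitian)
    (hnn : ∀ i, 0 ≤ hA.eigenvalues i) {t : ℝ} (ht0 : 0 < t)
    (ht1 : t ≤ 1 / ⨆ i, hA.eigenvalues i) :
    ∀ x ∈ spectrum ℝ A, x ≠ 0 → |1 - t * x| < 1 := by
  rw [hA.spectrum_real_eq_range_eigenvalues]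
  rintro _ ⟨i, rfl⟩ hi
  have hpos : 0 < hA.eigenvalues i := (hnn i).lt_of_ne' hi
  have hle : hA.eigenvalues i ≤ ⨆ j, hA.eigenvalues j :=
    le_ciSup (Set.finite_range _).bddAbove i
  have hmul : t * hA.eigenvalues i ≤ 1 :=
    calc t * hA.eigenvalues i ≤ 1 / (⨆ j, hA.eigenvalues j) * (⨆ j, hA.eigenvalues j) :=
          mul_le_mul ht1 hle hpos.le (one_div_pos.2 (hpos.trans_le hle)).le
      _ = 1 := one_div_mul_cancel (hpos.trans_le hle).ne'
  rw [abs_lt]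
  constructor <;> nlinarith [mul_pos ht0 hpos]

end IsHermitian

/-- `Xᵀ` has its range inside that of `XᵀX`: the projection `1 - (XᵀX)(XᵀX)⁺` kills `XᵀX`,
hence kills `Xᵀ`. -/
theorem transpose_mul_self_mul_cfc_inv_mul_transpose {m : Type*} [Fintype m]
    (X : Matrix m n ℝ) : Xᵀ * X * cfc (fun x : ℝ => x⁻¹) (Xᵀ * X) * Xᵀ = Xᵀ := by
  have hXH : Xᴴ = Xᵀ := conjTranspose_eq_transpose_of_trivial X
  have hA : (Xᵀ * X).IsHermitian := hXH ▸ isHermitian_conjTranspose_mul_self X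
  have h : (1 - Xᵀ * X * cfc (fun x : ℝ => x⁻¹) (Xᵀ * X)) * (Xᴴ * X) = 0 := by
    rw [hXH, sub_mul, one_mul, hA.mul_cfc_inv_mul, sub_self]
  rw [mul_conjTranspose_mul_self_eq_zero, Matrix.sub_mul, Matrix.one_mul, sub_eq_zero, hXH] at h
  exact h.symm

end Matrix

theorem tendsto_mul_self_add_inv_mul_nhdsGT_zero (x : ℝ) :
    Tendsto (fun δ : ℝ => (x * x + δ)⁻¹ * x) (𝓝[>] 0) (𝓝 x⁻¹) := by
  rcases eq_or_ne x 0 with rfl | hx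
  · simp
  · have h : Tendsto (fun δ : ℝ => (x * x + δ)⁻¹ * x) (𝓝 0) (𝓝 ((x * x + 0)⁻¹ * x)) :=
      ((tendsto_const_nhds.add tendsto_id).inv₀ (by simpa using hx)).mul_const x
    rw [add_zero, mul_inv, inv_mul_cancel_right₀ hx] at h
    exact h.mono_left nhdsWithin_le_nhds

theorem mpinv_eq_cfc_inv {k : ℕ} {A : Matrix (Fin k) (Fin k) ℝ} (hA : A.IsHermitian) :
    mpinv A = cfc (fun x : ℝ => x⁻¹) A := by
  have hT : Aᵀ = A := by rwa [← conjTranspose_eq_transpose_of_trivial]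
  have hc := A.continuousOn_real_spectrum
  have hridge : ∀ δ ∈ Set.Ioi (0 : ℝ),
      cfc (fun x => (x * x + δ)⁻¹ * x) A = (Aᵀ * A + δ • 1)⁻¹ * Aᵀ := by
    intro δ hδ
    have hne : ∀ x ∈ spectrum ℝ A, x * x + δ ≠ 0 :=
      fun x _ => (add_pos_of_nonneg_of_pos (mul_self_nonneg x) hδ).ne'
    rw [hT, cfc_mul _ _ _ (hc _) (hc _), cfc_inv _ A hne (hc _), cfc_add_const _ _ _ (hc _),
      cfc_mul _ _ _ (hc _) (hc _), cfc_id' ℝ A, nonsing_inv_eq_ringInverse,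
      Algebra.algebraMap_eq_smul_one]
  rw [mpinv]
  exact ((hA.tendsto_cfc fun x _ => tendsto_mul_self_add_inv_mul_nhdsGT_zero x).congr'
    (eventually_nhdsWithin_of_forall hridge)).limUnder_eq

/-- Gradient descent on the least squares loss, started at `0`
with step size `0 < t ≤ 1/λ_max(XᵀX)`, converges to the minimum ℓ₂-norm least
squares solution `β̂ = (XᵀX)⁺ Xᵀ y`. -/
theorem gradient_descent_converges_to_min_norm_ls
    {n p : ℕ} (X : Matrix (Fin n) (Fin p) ℝ) (y : Fin n → ℝ)
    (hH : (Xᵀ * X).IsHermitian)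
    (t : ℝ) (ht0 : 0 < t) (ht1 : t ≤ 1 / (⨆ i, hH.eigenvalues i))
    (β : ℕ → Fin p → ℝ) (hβ0 : β 0 = 0)
    (hβ : ∀ k : ℕ, β (k + 1) = β k + t • (Xᵀ.mulVec (y - X.mulVec (β k)))) :
    Tendsto β atTop (𝓝 ((mpinv (Xᵀ * X) * Xᵀ).mulVec y)) := by
  have hPSD : (Xᵀ * X).PosSemidef := by
    simpa only [conjTranspose_eq_transpose_of_trivial] using posSemidef_conjTranspose_mul_self X
  have hrange : ∃ z, (Xᵀ * X) *ᵥ z = Xᵀ *ᵥ y :=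
    ⟨cfc (fun x : ℝ => x⁻¹) (Xᵀ * X) *ᵥ (Xᵀ *ᵥ y), by
      rw [mulVec_mulVec, mulVec_mulVec, transpose_mul_self_mul_cfc_inv_mul_transpose]⟩
  have hgrad : ∀ k, β (k + 1) = β k + t • (Xᵀ *ᵥ y - (Xᵀ * X) *ᵥ β k) := by
    intro k
    rw [hβ, mulVec_sub, mulVec_mulVec]
  rw [mpinv_eq_cfc_inv hH, ← mulVec_mulVec]
  exact hH.tendsto_richardson
    (hH.abs_one_sub_mul_lt_one_of_mem_spectrum hPSD.eigenvalues_nonneg ht0 ht1) hrange hβ0 hgrad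

end
end

section
/- For every k ∈ ℕ there exist absolute constants C_{1,k}, C_{2,k} < ∞ such that: for any two functions f, g : [x−Δ, x+Δ] → ℝ that are (2k+1) times differentiable with bounded derivatives, and any δ ∈ (0, Δ/k), |f′(x) − g′(x)| ≤ (C_{1,k}/δ) ‖f−g‖_∞ + C_{2,k} ‖f^{(2k+1)} − g^{(2k+1)}‖_∞ δ^{2k}, where ‖·‖_∞ denotes the supremum norm on [x−Δ, x+Δ] and f^{(2k+1)} is the (2k+1)-th derivative. -/
/-!
Let `h = f - g`. Solving a Vandermonde system gives weights `w` with
`∑ j, w j * (j - k) ^ i = [i = 1]` for `i ≤ 2k`, so the central difference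
`∑ j, w j * h (x + (j - k) δ)` equals `δ h'(x)` when `h` is replaced by its Taylor polynomial
of degree `2k` at `x`. At each node that replacement costs at most
`‖h^(2k+1)‖ (kδ)^(2k+1) / (2k)!`, hence
`δ |h'(x)| ≤ (∑ j, |w j|) (‖h‖ + ‖h^(2k+1)‖ (kδ)^(2k+1) / (2k)!)`.
-/

open Set Matrix Finset
open scoped Nat

section

variable {E : Type*} [NormedAddCommGroup E] [NormedSpace ℝ E]

theorem norm_sub_taylorWithinEval_le {f : ℝ → E} {a b C x₀ x : ℝ} {n : ℕ} (hab : a < b)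
    (hf : ContDiffOn ℝ (n + 1) f (Icc a b)) (hx₀ : x₀ ∈ Icc a b) (hx : x ∈ Icc a b)
    (hC : ∀ y ∈ Icc a b, ‖iteratedDerivWithin (n + 1) f (Icc a b) y‖ ≤ C) :
    ‖f x - taylorWithinEval f n (Icc a b) x₀ x‖ ≤ C * |x - x₀| ^ (n + 1) / n ! := by
  have hf' : DifferentiableOn ℝ (iteratedDerivWithin n f (Icc a b)) (Icc a b) :=
    hf.differentiableOn_iteratedDerivWithin (mod_cast n.lt_succ_self) (uniqueDiffOn_Icc hab)
  have hsub : uIcc x₀ x ⊆ Icc a b := uIcc_subset_Icc hx₀ hx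
  -- mean value inequality for the Taylor polynomial as a function of its centre
  have hderiv : ∀ t ∈ uIcc x₀ x,
      HasDerivWithinAt (fun y ↦ taylorWithinEval f n (Icc a b) y x)
        (((n ! : ℝ)⁻¹ * (x - t) ^ n) • iteratedDerivWithin (n + 1) f (Icc a b) t)
        (uIcc x₀ x) t :=
    fun t ht ↦
      (hasDerivWithinAt_taylorWithinEval_at_Icc x hab (hsub ht) hf.of_succ hf').mono hsub
  have hbound : ∀ t ∈ uIcc x₀ x,
      ‖((n ! : ℝ)⁻¹ * (x - t) ^ n) • iteratedDerivWithin (n + 1) f (Icc a b) t‖ ≤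
        (n ! : ℝ)⁻¹ * |x - x₀| ^ n * C := by
    intro t ht
    rw [norm_smul, Real.norm_eq_abs, abs_mul, abs_pow, abs_inv, Nat.abs_cast]
    have hdist : |x - t| ≤ |x - x₀| := abs_sub_right_of_mem_uIcc ht
    gcongr
    exact hC t (hsub ht)
  have hmvt := Convex.norm_image_sub_le_of_norm_hasDerivWithin_le hderiv hbound
    (convex_uIcc x₀ x) left_mem_uIcc right_mem_uIcc
  rw [taylorWithinEval_self, Real.norm_eq_abs] at hmvt
  exact hmvt.trans_eq (by ring)

theorem exists_sum_mul_pow_eq {K : Type*} [Field K] {m : ℕ} {v : Fin m → K}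
    (hv : Function.Injective v) (e : ℕ → K) :
    ∃ w : Fin m → K, ∀ i < m, ∑ j, w j * v j ^ i = e i := by
  have hunit : IsUnit (vandermonde v)ᵀ := by
    rw [isUnit_iff_isUnit_det, det_transpose, isUnit_iff_ne_zero]
    exact det_vandermonde_ne_zero_iff.mpr hv
  obtain ⟨w, hw⟩ := mulVec_surjective_iff_isUnit.mpr hunit (fun i ↦ e i)
  refine ⟨w, fun i hi ↦ ?_⟩
  simpa [mulVec, dotProduct, mul_comm] using congrFun hw ⟨i, hi⟩

/-- `δ⁻¹ ∑ j, w j * p (x + c j * δ) = p' x` for every polynomial `p` of degree `≤ n`. -/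
def IsDerivWeights {m : ℕ} (n : ℕ) (c w : Fin m → ℝ) : Prop :=
  ∀ i ≤ n, ∑ j, w j * c j ^ i = if i = 1 then 1 else 0

theorem sum_smul_taylorWithinEval_eq {f : ℝ → E} {s : Set ℝ} {x δ : ℝ} {n m : ℕ}
    {w c : Fin m → ℝ} (hn : 1 ≤ n) (hw : IsDerivWeights n c w) :
    ∑ j, w j • taylorWithinEval f n s x (x + c j * δ) = δ • derivWithin f s x := by
  have hterm : ∀ i ∈ range (n + 1),
      ∑ j, w j • (((i ! : ℝ)⁻¹ * (x + c j * δ - x) ^ i) • iteratedDerivWithin i f s x) =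
        if i = 1 then δ • derivWithin f s x else 0 := by
    intro i hi
    simp_rw [smul_smul, ← sum_smul, add_sub_cancel_left, mul_pow]
    have hmoment : ∑ j, w j * ((i ! : ℝ)⁻¹ * (c j ^ i * δ ^ i)) =
        (∑ j, w j * c j ^ i) * ((i ! : ℝ)⁻¹ * δ ^ i) := by
      rw [sum_mul]
      exact sum_congr rfl fun j _ ↦ by ring
    rw [hmoment, hw i (Nat.lt_succ_iff.mp (mem_range.mp hi))]
    split_ifs with hi1
    · simp [hi1, iteratedDerivWithin_one]
    · simp
  simp_rw [taylor_within_apply, smul_sum]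
  rw [sum_comm, sum_congr rfl hterm, sum_ite_eq']
  exact if_pos (Finset.mem_range.mpr (by omega))

theorem mul_norm_derivWithin_le_of_isDerivWeights {h : ℝ → E} {a b x δ R ε₁ ε₂ : ℝ}
    {n m : ℕ} {w c : Fin m → ℝ} (hab : a < b) (hh : ContDiffOn ℝ (n + 1) h (Icc a b))
    (hx : x ∈ Icc a b) (hδ : 0 ≤ δ) (hn : 1 ≤ n) (hw : IsDerivWeights n c w)
    (hc : ∀ j, |c j| ≤ R) (hnodes : ∀ j, x + c j * δ ∈ Icc a b)
    (hε₁ : ∀ y ∈ Icc a b, ‖h y‖ ≤ ε₁)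
    (hε₂ : ∀ y ∈ Icc a b, ‖iteratedDerivWithin (n + 1) h (Icc a b) y‖ ≤ ε₂) :
    δ * ‖derivWithin h (Icc a b) x‖ ≤
      (∑ j, |w j|) * (ε₁ + ε₂ * (R * δ) ^ (n + 1) / n !) := by
  have hε₂0 : 0 ≤ ε₂ := (norm_nonneg _).trans (hε₂ x hx)
  have hnode : ∀ j, ‖taylorWithinEval h n (Icc a b) x (x + c j * δ)‖ ≤
      ε₁ + ε₂ * (R * δ) ^ (n + 1) / n ! := by
    intro j
    have hdist : |x + c j * δ - x| ≤ R * δ := by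
      rw [add_sub_cancel_left, abs_mul, abs_of_nonneg hδ]
      exact mul_le_mul_of_nonneg_right (hc j) hδ
    have hrem := norm_sub_taylorWithinEval_le hab hh hx (hnodes j) hε₂
    calc _ ≤ ‖h (x + c j * δ)‖ +
          ‖h (x + c j * δ) - taylorWithinEval h n (Icc a b) x (x + c j * δ)‖ :=
          norm_le_norm_add_norm_sub _ _
      _ ≤ ε₁ + ε₂ * (R * δ) ^ (n + 1) / n ! := by
          gcongr
          · exact hε₁ _ (hnodes j)
          · exact hrem.trans (by gcongr)
  calc δ * ‖derivWithin h (Icc a b) x‖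
      = ‖∑ j, w j • taylorWithinEval h n (Icc a b) x (x + c j * δ)‖ := by
        rw [sum_smul_taylorWithinEval_eq hn hw, norm_smul, Real.norm_eq_abs, abs_of_nonneg hδ]
    _ ≤ ∑ j, |w j| * (ε₁ + ε₂ * (R * δ) ^ (n + 1) / n !) := by
        refine (norm_sum_le _ _).trans (sum_le_sum fun j _ ↦ ?_)
        rw [norm_smul, Real.norm_eq_abs]
        exact mul_le_mul_of_nonneg_left (hnode j) (abs_nonneg _)
    _ = (∑ j, |w j|) * (ε₁ + ε₂ * (R * δ) ^ (n + 1) / n !) := by rw [sum_mul]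

end

def centralStencil (k : ℕ) (j : Fin (2 * k + 1)) : ℝ := j - k

theorem centralStencil_injective (k : ℕ) : Function.Injective (centralStencil k) := by
  intro i j hij
  simpa [centralStencil, Fin.val_inj] using hij

theorem abs_centralStencil_le (k : ℕ) (j : Fin (2 * k + 1)) : |centralStencil k j| ≤ k := by
  have hj : (j : ℝ) ≤ 2 * k := by exact_mod_cast Nat.lt_succ_iff.mp j.isLt
  rw [centralStencil, abs_le]
  constructor <;> linarith [(j : ℕ).cast_nonneg (α := ℝ)]

theorem abs_centralStencil_mul_le (k : ℕ) (j : Fin (2 * k + 1)) {δ : ℝ} (hδ : 0 ≤ δ) :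
    |centralStencil k j * δ| ≤ k * δ := by
  rw [abs_mul, abs_of_nonneg hδ]
  exact mul_le_mul_of_nonneg_right (abs_centralStencil_le k j) hδ

/-- For every `k ∈ ℕ` there are absolute constants
`C₁ = C_{1,k}` and `C₂ = C_{2,k}` such that for all `(2k+1)`-times
(continuously) differentiable functions `f, g` on `[x-Δ, x+Δ]` and all
`δ ∈ (0, Δ/k)`,
`|f'(x) - g'(x)| ≤ (C₁/δ) ‖f-g‖_∞ + C₂ ‖f^{(2k+1)} - g^{(2k+1)}‖_∞ δ^{2k}`,
the sup-norms being over `[x-Δ, x+Δ]` (expressed here through arbitrary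
pointwise bounds `ε₁, ε₂`). -/
theorem deriv_difference_bound (k : ℕ) :
    ∃ C₁ C₂ : ℝ, ∀ (x Δ δ : ℝ) (f g : ℝ → ℝ),
      0 < Δ →
      δ ∈ Set.Ioo 0 (Δ / k) →
      ContDiffOn ℝ ((2 * k + 1 : ℕ) : ℕ∞) f (Set.Icc (x - Δ) (x + Δ)) →
      ContDiffOn ℝ ((2 * k + 1 : ℕ) : ℕ∞) g (Set.Icc (x - Δ) (x + Δ)) →
      ∀ ε₁ ε₂ : ℝ,
        (∀ y ∈ Set.Icc (x - Δ) (x + Δ), |f y - g y| ≤ ε₁) →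
        (∀ y ∈ Set.Icc (x - Δ) (x + Δ),
          |iteratedDerivWithin (2 * k + 1) f (Set.Icc (x - Δ) (x + Δ)) y -
            iteratedDerivWithin (2 * k + 1) g (Set.Icc (x - Δ) (x + Δ)) y| ≤ ε₂) →
        |derivWithin f (Set.Icc (x - Δ) (x + Δ)) x -
            derivWithin g (Set.Icc (x - Δ) (x + Δ)) x| ≤
          C₁ / δ * ε₁ + C₂ * ε₂ * δ ^ (2 * k) := by
  obtain ⟨w, hw⟩ :=
    exists_sum_mul_pow_eq (centralStencil_injective k) fun i ↦ if i = 1 then (1 : ℝ) else 0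
  refine ⟨∑ j, |w j|, (∑ j, |w j|) * k ^ (2 * k + 1) / (2 * k)!, ?_⟩
  rintro x Δ δ f g hΔ ⟨hδ, hδk⟩ hf hg ε₁ ε₂ hε₁ hε₂
  obtain rfl | hk := Nat.eq_zero_or_pos k
  · rw [Nat.cast_zero, div_zero] at hδk
    linarith
  have hkδ : k * δ < Δ := (lt_div_iff₀' (by positivity)).mp hδk
  set s := Icc (x - Δ) (x + Δ)
  have hx : x ∈ s := ⟨by linarith, by linarith⟩
  have hnodes : ∀ j, x + centralStencil k j * δ ∈ s := fun j ↦ by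
    obtain ⟨hlow, hupp⟩ := abs_le.mp (abs_centralStencil_mul_le k j hδ.le)
    constructor <;> linarith
  have hfg : ContDiffOn ℝ ((2 * k : ℕ) + 1) (f - g) s := by exact_mod_cast hf.sub hg
  have hderiv : derivWithin (f - g) s x = derivWithin f s x - derivWithin g s x :=
    derivWithin_sub (hf.differentiableOn (by simp) x hx) (hg.differentiableOn (by simp) x hx)
  have hiter : ∀ y ∈ s, iteratedDerivWithin (2 * k + 1) (f - g) s y =
      iteratedDerivWithin (2 * k + 1) f s y - iteratedDerivWithin (2 * k + 1) g s y :=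
    fun y hy ↦ iteratedDerivWithin_sub hy (uniqueDiffOn_Icc (by linarith)) (hf y hy) (hg y hy)
  have key := mul_norm_derivWithin_le_of_isDerivWeights (by linarith) hfg hx hδ.le (by omega)
    (fun i hi ↦ hw i (Nat.lt_succ_of_le hi)) (abs_centralStencil_le k) hnodes
    (fun y hy ↦ by simpa only [Real.norm_eq_abs, Pi.sub_apply] using hε₁ y hy)
    (fun y hy ↦ by rw [Real.norm_eq_abs, hiter y hy]; exact hε₂ y hy)
  rw [hderiv, Real.norm_eq_abs] at key
  refine le_of_mul_le_mul_left (key.trans_eq ?_) hδ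
  rw [mul_pow, pow_succ δ]
  field_simp
end
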